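/- arXiv:1007.0325 — 5 statements merged into one kernel-verified Lean document; each statement's English description precedes it below -/
import Mathlib

section
/- Let (Q, L, F) be a Lagrangian system (not necessarily G-invariant) and let q(t) be a solution of the Euler–Lagrange equations with force F, i.e. d/dt(∂L/∂q̇ⁱ) − ∂L/∂qⁱ = F_i. Then along q(t), d/dt [J_L(q̇(t))(ξ)] = ξ_{TQ}(L)(q̇(t)) + ⟨F(q̇(t)), ξ_Q(q(t))⟩ for every ξ ∈ 𝔤. In particular J_L is conserved along all critical curves if and only if ⟨dL, ξ_{TQ}⟩ = −⟨F, ξ_Q⟩ holds along them for all ξ ∈ 𝔤. -/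
open scoped BigOperators

/-- ∂L/∂qⁱ at p = (q, q̇). -/
noncomputable def dLq {n : ℕ} (L : (Fin n → ℝ) × (Fin n → ℝ) → ℝ)
    (i : Fin n) (p : (Fin n → ℝ) × (Fin n → ℝ)) : ℝ :=
  fderiv ℝ L p (Pi.single i 1, 0)

/-- ∂L/∂q̇ⁱ at p = (q, q̇). -/
noncomputable def dLv {n : ℕ} (L : (Fin n → ℝ) × (Fin n → ℝ) → ℝ)
    (i : Fin n) (p : (Fin n → ℝ) × (Fin n → ℝ)) : ℝ :=
  fderiv ℝ L p (0, Pi.single i 1)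

/-- Momentum map J_L(v_q)(ξ) = Σᵢ (∂L/∂q̇ⁱ) ξ_Q(q)ⁱ for the generator ξ_Q. -/
noncomputable def momentum {n : ℕ} (L : (Fin n → ℝ) × (Fin n → ℝ) → ℝ)
    (ξQ : (Fin n → ℝ) → Fin n → ℝ) (p : (Fin n → ℝ) × (Fin n → ℝ)) : ℝ :=
  ∑ i, dLv L i p * ξQ p.1 i

/-- Action of the lifted generator ξ_{TQ} = ξ_Qⁱ ∂/∂qⁱ + (∂ξ_Qⁱ/∂qʲ q̇ʲ) ∂/∂q̇ⁱ on L. -/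
noncomputable def liftAction {n : ℕ} (L : (Fin n → ℝ) × (Fin n → ℝ) → ℝ)
    (ξQ : (Fin n → ℝ) → Fin n → ℝ) (p : (Fin n → ℝ) × (Fin n → ℝ)) : ℝ :=
  (∑ i, dLq L i p * ξQ p.1 i) + ∑ i, dLv L i p * fderiv ℝ ξQ p.1 p.2 i

/-- Along any solution q(t) of the forced Euler–Lagrange equations
d/dt(∂L/∂q̇ⁱ) − ∂L/∂qⁱ = F_i, for every generator ξ_Q one has
d/dt [J_L(q̇(t))(ξ)] = ξ_{TQ}(L)(q̇(t)) + ⟨F(q̇(t)), ξ_Q(q(t))⟩; in particular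
J_L is conserved iff ⟨dL, ξ_{TQ}⟩ = −⟨F, ξ_Q⟩ along the curve. -/
theorem stmt3 {n : ℕ}
    (L : (Fin n → ℝ) × (Fin n → ℝ) → ℝ) (hL : ContDiff ℝ (⊤ : ℕ∞) L)
    (F : (Fin n → ℝ) × (Fin n → ℝ) → Fin n → ℝ)
    (q q' q'' : ℝ → Fin n → ℝ)
    (hq : ∀ t, HasDerivAt q (q' t) t)
    (hq' : ∀ t, HasDerivAt q' (q'' t) t)
    (ξQ : (Fin n → ℝ) → Fin n → ℝ) (hξ : ContDiff ℝ (⊤ : ℕ∞) ξQ)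
    (hEL : ∀ t i, deriv (fun s => dLv L i (q s, q' s)) t - dLq L i (q t, q' t)
        = F (q t, q' t) i) :
    (∀ t, deriv (fun s => momentum L ξQ (q s, q' s)) t
        = liftAction L ξQ (q t, q' t) + ∑ i, F (q t, q' t) i * ξQ (q t) i) ∧
    ((∀ t, deriv (fun s => momentum L ξQ (q s, q' s)) t = 0) ↔
      (∀ t, liftAction L ξQ (q t, q' t)
          = -∑ i, F (q t, q' t) i * ξQ (q t) i)) := by

  have key : ∀ t, deriv (fun s => momentum L ξQ (q s, q' s)) t
      = liftAction L ξQ (q t, q' t) + ∑ i, F (q t, q' t) i * ξQ (q t) i := by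
    intro t
    have hc : ∀ s, HasDerivAt (fun u => (q u, q' u)) (q' s, q'' s) s :=
      fun s => HasDerivAt.prodMk (hq s) (hq' s)
    have hdlv : ∀ i, Differentiable ℝ (fun p => dLv L i p) := by
      intro i
      have : ContDiff ℝ (⊤ : ℕ∞) (fun p => dLv L i p) :=
        (hL.fderiv_right (by simp)).clm_apply contDiff_const
      exact this.differentiable (by simp)
    have hf : ∀ i, DifferentiableAt ℝ (fun u => dLv L i (q u, q' u)) t := fun i =>
      ((hdlv i).differentiableAt).comp t (hc t).differentiableAt
    have hg : HasDerivAt (fun u => ξQ (q u)) (fderiv ℝ ξQ (q t) (q' t)) t :=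
      ((hξ.differentiable (by simp) (q t)).hasFDerivAt).comp_hasDerivAt t (hq t)
    have hgi : ∀ i, HasDerivAt (fun u => ξQ (q u) i) (fderiv ℝ ξQ (q t) (q' t) i) t :=
      fun i => hasDerivAt_pi.mp hg i
    have hM : HasDerivAt (fun s => momentum L ξQ (q s, q' s))
        (∑ i, (deriv (fun u => dLv L i (q u, q' u)) t * ξQ (q t) i
          + dLv L i (q t, q' t) * fderiv ℝ ξQ (q t) (q' t) i)) t := by
      have : HasDerivAt (fun s => ∑ i, dLv L i (q s, q' s) * ξQ (q s) i)
          (∑ i : Fin n, (deriv (fun u => dLv L i (q u, q' u)) t * ξQ (q t) i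
            + dLv L i (q t, q' t) * fderiv ℝ ξQ (q t) (q' t) i)) t :=
        HasDerivAt.fun_sum (fun i _ => ((hf i).hasDerivAt).mul (hgi i))
      simpa [momentum] using this
    rw [hM.deriv, liftAction]
    have hterm : ∀ i : Fin n,
        deriv (fun u => dLv L i (q u, q' u)) t * ξQ (q t) i
          + dLv L i (q t, q' t) * fderiv ℝ ξQ (q t) (q' t) i
        = (dLq L i (q t, q' t) * ξQ (q t) i
            + dLv L i (q t, q' t) * fderiv ℝ ξQ (q t) (q' t) i)
          + F (q t, q' t) i * ξQ (q t) i := by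
      intro i
      have h := hEL t i
      have : deriv (fun u => dLv L i (q u, q' u)) t
          = dLq L i (q t, q' t) + F (q t, q' t) i := by linarith
      rw [this]; ring
    rw [Finset.sum_congr rfl (fun i _ => hterm i), Finset.sum_add_distrib,
      Finset.sum_add_distrib]
  refine ⟨key, ?_⟩
  constructor
  · intro h t
    have := key t
    rw [h t] at this
    linarith
  · intro h t
    rw [key t, h t]
    ring
end

section
/- Let π : M → N be a fibration, L : T_M N → ℝ a Lagrangian depending only on base velocities, and suppose in adapted local coordinates (xⁱ, yᵃ) the constraint ∂L/∂yᵃ(x, ẋ, y) = 0 can be solved as yᵃ = γᵃ(x, ẋ) for a smooth map γ : TN → M. Define L'(x, ẋ) = L(x, ẋ, γ(x, ẋ)). Then a curve (x(t), y(t)) in M satisfies the Euler–Lagrange equations d/dt(∂L/∂ẋⁱ) = ∂L/∂xⁱ + F_i together with yᵃ = γᵃ(x, ẋ) if and only if x(t) satisfies d/dt(∂L'/∂ẋⁱ) = ∂L'/∂xⁱ + F_i(x, γ(x, ẋ), ẋ). -/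
/-- ∂L/∂xⁱ for L = L(x, ẋ, y). -/
noncomputable def pdx {n m : ℕ} (L : (Fin n → ℝ) → (Fin n → ℝ) → (Fin m → ℝ) → ℝ)
    (i : Fin n) (x v : Fin n → ℝ) (y : Fin m → ℝ) : ℝ :=
  fderiv ℝ (fun x' => L x' v y) x (Pi.single i 1)

/-- ∂L/∂ẋⁱ for L = L(x, ẋ, y). -/
noncomputable def pdv {n m : ℕ} (L : (Fin n → ℝ) → (Fin n → ℝ) → (Fin m → ℝ) → ℝ)
    (i : Fin n) (x v : Fin n → ℝ) (y : Fin m → ℝ) : ℝ :=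
  fderiv ℝ (fun v' => L x v' y) v (Pi.single i 1)

/-- ∂L/∂yᵃ for L = L(x, ẋ, y). -/
noncomputable def pdy {n m : ℕ} (L : (Fin n → ℝ) → (Fin n → ℝ) → (Fin m → ℝ) → ℝ)
    (a : Fin m) (x v : Fin n → ℝ) (y : Fin m → ℝ) : ℝ :=
  fderiv ℝ (L x v) y (Pi.single a 1)

/-- ∂L'/∂xⁱ for L'(x, ẋ) (a Lagrangian on the base N). -/
noncomputable def pdx' {n : ℕ} (L' : (Fin n → ℝ) → (Fin n → ℝ) → ℝ)
    (i : Fin n) (x v : Fin n → ℝ) : ℝ :=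
  fderiv ℝ (fun x' => L' x' v) x (Pi.single i 1)

/-- ∂L'/∂ẋⁱ for L'(x, ẋ). -/
noncomputable def pdv' {n : ℕ} (L' : (Fin n → ℝ) → (Fin n → ℝ) → ℝ)
    (i : Fin n) (x v : Fin n → ℝ) : ℝ :=
  fderiv ℝ (fun v' => L' x v') v (Pi.single i 1)

section Aux

variable {n m : ℕ}

/-- ∂L/∂ẋⁱ as full derivative. -/
lemma pdv_eq_full (L : (Fin n → ℝ) → (Fin n → ℝ) → (Fin m → ℝ) → ℝ)
    (hL : ContDiff ℝ (⊤ : ℕ∞) fun p : ((Fin n → ℝ) × (Fin n → ℝ)) × (Fin m → ℝ) => L p.1.1 p.1.2 p.2)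
    (x v : Fin n → ℝ) (y : Fin m → ℝ) (i : Fin n) :
    pdv L i x v y
      = fderiv ℝ (fun p : ((Fin n → ℝ) × (Fin n → ℝ)) × (Fin m → ℝ) => L p.1.1 p.1.2 p.2)
          ((x, v), y) ((0, Pi.single i 1), 0) := by
  have hLd : Differentiable ℝ (fun p : ((Fin n → ℝ) × (Fin n → ℝ)) × (Fin m → ℝ) =>
      L p.1.1 p.1.2 p.2) := hL.differentiable (by simp)
  have hι : HasFDerivAt
      (fun v' : Fin n → ℝ => (((x, v'), y) : ((Fin n → ℝ) × (Fin n → ℝ)) × (Fin m → ℝ)))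
      ((((0 : (Fin n → ℝ) →L[ℝ] (Fin n → ℝ)).prod (ContinuousLinearMap.id ℝ (Fin n → ℝ))).prod
        (0 : (Fin n → ℝ) →L[ℝ] (Fin m → ℝ)))) v :=
    HasFDerivAt.prodMk (HasFDerivAt.prodMk (hasFDerivAt_const x v) (hasFDerivAt_id v)) (hasFDerivAt_const y v)
  have hcomp := ((hLd ((x, v), y)).hasFDerivAt).comp v hι
  have h2 : fderiv ℝ (fun v' => L x v' y) v = _ := hcomp.fderiv
  rw [pdv, h2]
  simp

/-- ∂L/∂xⁱ as full derivative. -/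
lemma pdx_eq_full (L : (Fin n → ℝ) → (Fin n → ℝ) → (Fin m → ℝ) → ℝ)
    (hL : ContDiff ℝ (⊤ : ℕ∞) fun p : ((Fin n → ℝ) × (Fin n → ℝ)) × (Fin m → ℝ) => L p.1.1 p.1.2 p.2)
    (x v : Fin n → ℝ) (y : Fin m → ℝ) (i : Fin n) :
    pdx L i x v y
      = fderiv ℝ (fun p : ((Fin n → ℝ) × (Fin n → ℝ)) × (Fin m → ℝ) => L p.1.1 p.1.2 p.2)
          ((x, v), y) ((Pi.single i 1, 0), 0) := by
  have hLd : Differentiable ℝ (fun p : ((Fin n → ℝ) × (Fin n → ℝ)) × (Fin m → ℝ) =>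
      L p.1.1 p.1.2 p.2) := hL.differentiable (by simp)
  have hι : HasFDerivAt
      (fun x' : Fin n → ℝ => (((x', v), y) : ((Fin n → ℝ) × (Fin n → ℝ)) × (Fin m → ℝ)))
      ((((ContinuousLinearMap.id ℝ (Fin n → ℝ)).prod (0 : (Fin n → ℝ) →L[ℝ] (Fin n → ℝ))).prod
        (0 : (Fin n → ℝ) →L[ℝ] (Fin m → ℝ)))) x :=
    HasFDerivAt.prodMk (HasFDerivAt.prodMk (hasFDerivAt_id x) (hasFDerivAt_const v x)) (hasFDerivAt_const y x)
  have hcomp := ((hLd ((x, v), y)).hasFDerivAt).comp x hι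
  have h2 : fderiv ℝ (fun x' => L x' v y) x = _ := hcomp.fderiv
  rw [pdx, h2]
  simp

/-- ∂L/∂yᵃ as full derivative. -/
lemma pdy_eq_full (L : (Fin n → ℝ) → (Fin n → ℝ) → (Fin m → ℝ) → ℝ)
    (hL : ContDiff ℝ (⊤ : ℕ∞) fun p : ((Fin n → ℝ) × (Fin n → ℝ)) × (Fin m → ℝ) => L p.1.1 p.1.2 p.2)
    (x v : Fin n → ℝ) (y : Fin m → ℝ) (a : Fin m) :
    pdy L a x v y
      = fderiv ℝ (fun p : ((Fin n → ℝ) × (Fin n → ℝ)) × (Fin m → ℝ) => L p.1.1 p.1.2 p.2)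
          ((x, v), y) ((0, 0), Pi.single a 1) := by
  have hLd : Differentiable ℝ (fun p : ((Fin n → ℝ) × (Fin n → ℝ)) × (Fin m → ℝ) =>
      L p.1.1 p.1.2 p.2) := hL.differentiable (by simp)
  have hι : HasFDerivAt
      (fun y' : Fin m → ℝ => (((x, v), y') : ((Fin n → ℝ) × (Fin n → ℝ)) × (Fin m → ℝ)))
      ((0 : (Fin m → ℝ) →L[ℝ] ((Fin n → ℝ) × (Fin n → ℝ))).prod
        (ContinuousLinearMap.id ℝ (Fin m → ℝ))) y :=
    HasFDerivAt.prodMk (hasFDerivAt_const (x, v) y) (hasFDerivAt_id y)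
  have hcomp := ((hLd ((x, v), y)).hasFDerivAt).comp y hι
  have h2 : fderiv ℝ (fun y' => L x v y') y = _ := hcomp.fderiv
  rw [pdy]
  show fderiv ℝ (fun y' => L x v y') y (Pi.single a 1) = _
  rw [h2]
  simp [Prod.ext_iff]
  rfl

/-- On the constraint surface the fibre differential of L vanishes entirely. -/
lemma fibre_deriv_zero (L : (Fin n → ℝ) → (Fin n → ℝ) → (Fin m → ℝ) → ℝ)
    (hL : ContDiff ℝ (⊤ : ℕ∞) fun p : ((Fin n → ℝ) × (Fin n → ℝ)) × (Fin m → ℝ) => L p.1.1 p.1.2 p.2)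
    (γ : (Fin n → ℝ) → (Fin n → ℝ) → (Fin m → ℝ))
    (hsol : ∀ x v (a : Fin m), pdy L a x v (γ x v) = 0)
    (x v : Fin n → ℝ) (w : Fin m → ℝ) :
    fderiv ℝ (fun p : ((Fin n → ℝ) × (Fin n → ℝ)) × (Fin m → ℝ) => L p.1.1 p.1.2 p.2)
      ((x, v), γ x v) ((0, 0), w) = 0 := by
  classical
  set D := fderiv ℝ (fun p : ((Fin n → ℝ) × (Fin n → ℝ)) × (Fin m → ℝ) => L p.1.1 p.1.2 p.2)
      ((x, v), γ x v) with hD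
  have hb : ∀ a : Fin m, D ((0, 0), Pi.single a 1) = 0 := by
    intro a
    rw [← pdy_eq_full L hL]
    exact hsol x v a
  set φ : (Fin m → ℝ) →L[ℝ] ℝ :=
    D.comp (ContinuousLinearMap.inr ℝ ((Fin n → ℝ) × (Fin n → ℝ)) (Fin m → ℝ)) with hφ
  have hφa : ∀ w', φ w' = D ((0, 0), w') := fun w' => rfl
  have hkey : φ w = ∑ a : Fin m, w a • φ fun j => if a = j then (1:ℝ) else 0 :=
    φ.toLinearMap.pi_apply_eq_sum_univ w
  have hsingle : ∀ a : Fin m, (fun j => if a = j then (1:ℝ) else 0) = Pi.single a 1 := by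
    intro a; funext j; simp [Pi.single_apply, eq_comm]
  rw [← hφa, hkey]
  refine Finset.sum_eq_zero fun a _ => ?_
  rw [hsingle a, hφa, hb a, smul_zero]

lemma pdv'_eq (L : (Fin n → ℝ) → (Fin n → ℝ) → (Fin m → ℝ) → ℝ)
    (hL : ContDiff ℝ (⊤ : ℕ∞) fun p : ((Fin n → ℝ) × (Fin n → ℝ)) × (Fin m → ℝ) => L p.1.1 p.1.2 p.2)
    (γ : (Fin n → ℝ) → (Fin n → ℝ) → (Fin m → ℝ))
    (hsol : ∀ x v (a : Fin m), pdy L a x v (γ x v) = 0)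
    (hγ : ContDiff ℝ (⊤ : ℕ∞) fun p : (Fin n → ℝ) × (Fin n → ℝ) => γ p.1 p.2)
    (L' : (Fin n → ℝ) → (Fin n → ℝ) → ℝ)
    (hL' : ∀ x v, L' x v = L x v (γ x v))
    (x v : Fin n → ℝ) (i : Fin n) :
    pdv' L' i x v = pdv L i x v (γ x v) := by
  have hLd : Differentiable ℝ (fun p : ((Fin n → ℝ) × (Fin n → ℝ)) × (Fin m → ℝ) =>
      L p.1.1 p.1.2 p.2) := hL.differentiable (by simp)
  have hγd : Differentiable ℝ (fun p : (Fin n → ℝ) × (Fin n → ℝ) => γ p.1 p.2) :=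
    hγ.differentiable (by simp)
  set G := fderiv ℝ (fun p : (Fin n → ℝ) × (Fin n → ℝ) => γ p.1 p.2) (x, v) with hG
  have hGd : HasFDerivAt (fun p : (Fin n → ℝ) × (Fin n → ℝ) => γ p.1 p.2) G (x, v) :=
    (hγd (x, v)).hasFDerivAt
  set A : (Fin n → ℝ) →L[ℝ] ((Fin n → ℝ) × (Fin n → ℝ)) :=
    (0 : (Fin n → ℝ) →L[ℝ] (Fin n → ℝ)).prod (ContinuousLinearMap.id ℝ (Fin n → ℝ)) with hA
  have hincl : HasFDerivAt (fun v' : Fin n → ℝ => ((x, v') : (Fin n → ℝ) × (Fin n → ℝ))) A v :=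
    HasFDerivAt.prodMk (hasFDerivAt_const x v) (hasFDerivAt_id v)
  have hγv : HasFDerivAt (fun v' => γ x v') (G.comp A) v := hGd.comp v hincl
  have hψ : HasFDerivAt
      (fun v' : Fin n → ℝ =>
        (((x, v'), γ x v') : ((Fin n → ℝ) × (Fin n → ℝ)) × (Fin m → ℝ)))
      (A.prod (G.comp A)) v := HasFDerivAt.prodMk hincl hγv
  have hcomp := ((hLd ((x, v), γ x v)).hasFDerivAt).comp v hψ
  have hfun : (fun v' => L' x v') = fun v' => L x v' (γ x v') := funext fun v' => hL' x v'
  have h2 : fderiv ℝ (fun v' => L x v' (γ x v')) v = _ := hcomp.fderiv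
  rw [pdv', hfun, h2]
  have happ :
      ((fderiv ℝ (fun p : ((Fin n → ℝ) × (Fin n → ℝ)) × (Fin m → ℝ) => L p.1.1 p.1.2 p.2)
        ((x, v), γ x v)).comp (A.prod (G.comp A))) (Pi.single i 1)
      = fderiv ℝ (fun p : ((Fin n → ℝ) × (Fin n → ℝ)) × (Fin m → ℝ) => L p.1.1 p.1.2 p.2)
        ((x, v), γ x v) (((0, Pi.single i 1), G (0, Pi.single i 1))) := by
    simp [hA]
  rw [happ]
  have hsplit : (((0, Pi.single i 1), G (0, Pi.single i 1)) :
        ((Fin n → ℝ) × (Fin n → ℝ)) × (Fin m → ℝ))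
      = ((0, Pi.single i 1), 0) + ((0, 0), G (0, Pi.single i 1)) := by
    simp [Prod.ext_iff]
  rw [hsplit, map_add, fibre_deriv_zero L hL γ hsol, add_zero, ← pdv_eq_full L hL]

lemma pdx'_eq (L : (Fin n → ℝ) → (Fin n → ℝ) → (Fin m → ℝ) → ℝ)
    (hL : ContDiff ℝ (⊤ : ℕ∞) fun p : ((Fin n → ℝ) × (Fin n → ℝ)) × (Fin m → ℝ) => L p.1.1 p.1.2 p.2)
    (γ : (Fin n → ℝ) → (Fin n → ℝ) → (Fin m → ℝ))
    (hsol : ∀ x v (a : Fin m), pdy L a x v (γ x v) = 0)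
    (hγ : ContDiff ℝ (⊤ : ℕ∞) fun p : (Fin n → ℝ) × (Fin n → ℝ) => γ p.1 p.2)
    (L' : (Fin n → ℝ) → (Fin n → ℝ) → ℝ)
    (hL' : ∀ x v, L' x v = L x v (γ x v))
    (x v : Fin n → ℝ) (i : Fin n) :
    pdx' L' i x v = pdx L i x v (γ x v) := by
  have hLd : Differentiable ℝ (fun p : ((Fin n → ℝ) × (Fin n → ℝ)) × (Fin m → ℝ) =>
      L p.1.1 p.1.2 p.2) := hL.differentiable (by simp)
  have hγd : Differentiable ℝ (fun p : (Fin n → ℝ) × (Fin n → ℝ) => γ p.1 p.2) :=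
    hγ.differentiable (by simp)
  set G := fderiv ℝ (fun p : (Fin n → ℝ) × (Fin n → ℝ) => γ p.1 p.2) (x, v) with hG
  have hGd : HasFDerivAt (fun p : (Fin n → ℝ) × (Fin n → ℝ) => γ p.1 p.2) G (x, v) :=
    (hγd (x, v)).hasFDerivAt
  set A : (Fin n → ℝ) →L[ℝ] ((Fin n → ℝ) × (Fin n → ℝ)) :=
    (ContinuousLinearMap.id ℝ (Fin n → ℝ)).prod (0 : (Fin n → ℝ) →L[ℝ] (Fin n → ℝ)) with hA
  have hincl : HasFDerivAt (fun x' : Fin n → ℝ => ((x', v) : (Fin n → ℝ) × (Fin n → ℝ))) A x :=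
    HasFDerivAt.prodMk (hasFDerivAt_id x) (hasFDerivAt_const v x)
  have hγx : HasFDerivAt (fun x' => γ x' v) (G.comp A) x := by
    have := hGd.comp x hincl; exact this
  have hψ : HasFDerivAt
      (fun x' : Fin n → ℝ =>
        (((x', v), γ x' v) : ((Fin n → ℝ) × (Fin n → ℝ)) × (Fin m → ℝ)))
      (A.prod (G.comp A)) x := HasFDerivAt.prodMk hincl hγx
  have hcomp := ((hLd ((x, v), γ x v)).hasFDerivAt).comp x hψ
  have hfun : (fun x' => L' x' v) = fun x' => L x' v (γ x' v) := funext fun x' => hL' x' v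
  have h2 : fderiv ℝ (fun x' => L x' v (γ x' v)) x = _ := hcomp.fderiv
  rw [pdx', hfun, h2]
  have happ :
      ((fderiv ℝ (fun p : ((Fin n → ℝ) × (Fin n → ℝ)) × (Fin m → ℝ) => L p.1.1 p.1.2 p.2)
        ((x, v), γ x v)).comp (A.prod (G.comp A))) (Pi.single i 1)
      = fderiv ℝ (fun p : ((Fin n → ℝ) × (Fin n → ℝ)) × (Fin m → ℝ) => L p.1.1 p.1.2 p.2)
        ((x, v), γ x v) (((Pi.single i 1, 0), G (Pi.single i 1, 0))) := by
    simp [hA]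
  rw [happ]
  have hsplit : (((Pi.single i 1, 0), G (Pi.single i 1, 0)) :
        ((Fin n → ℝ) × (Fin n → ℝ)) × (Fin m → ℝ))
      = ((Pi.single i 1, 0), 0) + ((0, 0), G (Pi.single i 1, 0)) := by
    simp [Prod.ext_iff]
  rw [hsplit, map_add, fibre_deriv_zero L hL γ hsol, add_zero, ← pdx_eq_full L hL]

end Aux

/-- Regular configuration constraints.  If the constraint
∂L/∂yᵃ(x, ẋ, y) = 0 is regular, solved smoothly by y = γ(x, ẋ), and
L'(x, ẋ) = L(x, ẋ, γ(x, ẋ)), then a curve (x(t), y(t)) in M satisfies the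
horizontal Euler–Lagrange equations d/dt(∂L/∂ẋⁱ) = ∂L/∂xⁱ + F_i together with
y = γ(x, ẋ) iff x(t) satisfies d/dt(∂L'/∂ẋⁱ) = ∂L'/∂xⁱ + F_i(x, ẋ, γ(x, ẋ)). -/
theorem stmt6 {n m : ℕ}
    (L : (Fin n → ℝ) → (Fin n → ℝ) → (Fin m → ℝ) → ℝ)
    (γ : (Fin n → ℝ) → (Fin n → ℝ) → (Fin m → ℝ))
    (F : (Fin n → ℝ) → (Fin n → ℝ) → (Fin m → ℝ) → Fin n → ℝ)
    (hL : ContDiff ℝ (⊤ : ℕ∞) fun p : ((Fin n → ℝ) × (Fin n → ℝ)) × (Fin m → ℝ) =>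
            L p.1.1 p.1.2 p.2)
    (hγ : ContDiff ℝ (⊤ : ℕ∞) fun p : (Fin n → ℝ) × (Fin n → ℝ) => γ p.1 p.2)
    -- γ parametrizes the constraint surface {∂L/∂yᵃ = 0}:
    (hsol : ∀ x v (a : Fin m), pdy L a x v (γ x v) = 0)
    (hsol' : ∀ x v y, (∀ a : Fin m, pdy L a x v y = 0) → y = γ x v)
    (L' : (Fin n → ℝ) → (Fin n → ℝ) → ℝ)
    (hL' : ∀ x v, L' x v = L x v (γ x v)) :
    ∀ (x x' : ℝ → Fin n → ℝ), (∀ t, HasDerivAt x (x' t) t) →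
      ((∃ y : ℝ → Fin m → ℝ,
          (∀ t, y t = γ (x t) (x' t)) ∧
          (∀ t (i : Fin n),
            deriv (fun s => pdv L i (x s) (x' s) (y s)) t
              = pdx L i (x t) (x' t) (y t) + F (x t) (x' t) (y t) i))
        ↔
        (∀ t (i : Fin n),
          deriv (fun s => pdv' L' i (x s) (x' s)) t
            = pdx' L' i (x t) (x' t) + F (x t) (x' t) (γ (x t) (x' t)) i)) := by
  intro x x' _
  have hv : ∀ (i : Fin n) (a b : Fin n → ℝ),
      pdv' L' i a b = pdv L i a b (γ a b) := fun i a b => pdv'_eq L hL γ hsol hγ L' hL' a b i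
  have hx : ∀ (i : Fin n) (a b : Fin n → ℝ),
      pdx' L' i a b = pdx L i a b (γ a b) := fun i a b => pdx'_eq L hL γ hsol hγ L' hL' a b i
  constructor
  · rintro ⟨y, hy, hel⟩ t i
    have hfun : (fun s => pdv' L' i (x s) (x' s))
        = fun s => pdv L i (x s) (x' s) (y s) := by
      funext s; rw [hv, ← hy s]
    rw [hfun, hel t i, hx, ← hy t, hy t]
  · intro h
    refine ⟨fun t => γ (x t) (x' t), fun t => rfl, fun t i => ?_⟩
    have hfun : (fun s => pdv L i (x s) (x' s) (γ (x s) (x' s)))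
        = fun s => pdv' L' i (x s) (x' s) := by
      funext s; rw [hv]
    rw [hfun, h t i, hx]
end

section
/- Let π : M → N be a vector bundle, α : TN → M* a bundle map over the identity, L₀ : TN → ℝ, and L(v_n, m) = L₀(v_n) + ⟨α(v_n), m⟩ the associated linear Lagrangian on T_M N. Suppose the force term satisfies F = T*π ∘ F̂ ∘ Tπ with F̂ : TN → T*N. Then any critical curve m(t) of the intrinsically constrained Lagrangian system (π : M → N, L, F) projects under π to a curve n(t) in N that is critical for the Lagrangian L₀ with force F̂ among variations constrained to C = {v_n ∈ TN : α(v_n) = 0}; moreover the tangent lift ṅ(t) lies in C. -/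
open scoped BigOperators
open intervalIntegral

lemma nonneg_integral_zero {a b : ℝ} {g : ℝ → ℝ}
    (hg : Continuous g) (hnn : ∀ t ∈ Set.Icc a b, 0 ≤ g t)
    (hint : (∫ t in a..b, g t) = 0) :
    ∀ t ∈ Set.Ioo a b, g t = 0 := by
  have hHzero : ∀ s ∈ Set.Icc a b, (∫ t in a..s, g t) = 0 := by
    intro s hs
    have h1 : 0 ≤ ∫ t in a..s, g t :=
      intervalIntegral.integral_nonneg hs.1 (fun u hu => hnn u ⟨hu.1, hu.2.trans hs.2⟩)
    have h2 : 0 ≤ ∫ t in s..b, g t :=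
      intervalIntegral.integral_nonneg hs.2 (fun u hu => hnn u ⟨hs.1.trans hu.1, hu.2⟩)
    have h3 : (∫ t in a..s, g t) + ∫ t in s..b, g t = 0 := by
      rw [intervalIntegral.integral_add_adjacent_intervals (hg.intervalIntegrable _ _)
        (hg.intervalIntegrable _ _), hint]
    linarith
  intro t ht
  have hd : HasDerivAt (fun u => ∫ s in a..u, g s) (g t) t :=
    intervalIntegral.integral_hasDerivAt_right (hg.intervalIntegrable _ _)
      (hg.stronglyMeasurable.stronglyMeasurableAtFilter) hg.continuousAt
  have heq : (fun u => ∫ s in a..u, g s) =ᶠ[nhds t] fun _ => 0 := by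
    filter_upwards [Ioo_mem_nhds ht.1 ht.2] with u hu
    exact hHzero u ⟨hu.1.le, hu.2.le⟩
  have hd0 : HasDerivAt (fun u => ∫ s in a..u, g s) 0 t :=
    (hasDerivAt_const t (0:ℝ)).congr_of_eventuallyEq heq
  exact hd.unique hd0

/-- Linear constraints and Lagrange multipliers.  For the linear
fibration M = ℝⁿ × ℝᵐ → N = ℝⁿ, the linear Lagrangian
L(v_n, m) = L₀(v_n) + ⟨α(v_n), m⟩ and a force F = T*π ∘ F̂ ∘ Tπ, every critical
curve (x(t), y(t)) of the intrinsically constrained system projects to a curve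
x(t) in N that is critical for (N, L₀, F̂) among variations whose tangent lifts
stay in C = {v : α(v) = 0}; moreover ẋ(t) itself lies in C.

Criticality of (x, y) is expressed by the vanishing of the first variation
δ∫L dt + ∫⟨F, δm⟩ dt = 0 for all smooth fixed-endpoint deformations
c(ε, t) ∈ M of (x, y); note ⟨F(ṁ), δm⟩ = ⟨F̂(ẋ), δx⟩ since F = T*π∘F̂∘Tπ. -/
theorem stmt7 {n m : ℕ} (ta tb : ℝ) (htab : ta < tb)
    (L0 : (Fin n → ℝ) → (Fin n → ℝ) → ℝ)
    (α : (Fin n → ℝ) → (Fin n → ℝ) → (Fin m → ℝ))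
    (Fhat : (Fin n → ℝ) → (Fin n → ℝ) → (Fin n → ℝ))
    (hL0 : ContDiff ℝ (⊤ : ℕ∞) fun p : (Fin n → ℝ) × (Fin n → ℝ) => L0 p.1 p.2)
    (hα : ContDiff ℝ (⊤ : ℕ∞) fun p : (Fin n → ℝ) × (Fin n → ℝ) => α p.1 p.2)
    (hFhat : Continuous fun p : (Fin n → ℝ) × (Fin n → ℝ) => Fhat p.1 p.2)
    (L : (Fin n → ℝ) → (Fin n → ℝ) → (Fin m → ℝ) → ℝ)
    (hL : ∀ x v w, L x v w = L0 x v + ∑ a, α x v a * w a)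
    -- the critical curve (x, y) of the intrinsically constrained system:
    (x : ℝ → Fin n → ℝ) (y : ℝ → Fin m → ℝ)
    (hx : ContDiff ℝ (⊤ : ℕ∞) x) (hy : ContDiff ℝ (⊤ : ℕ∞) y)
    (hcrit : ∀ c : ℝ → ℝ → (Fin n → ℝ) × (Fin m → ℝ),
      ContDiff ℝ (⊤ : ℕ∞) (fun p : ℝ × ℝ => c p.1 p.2) →
      (∀ t, c 0 t = (x t, y t)) →
      (∀ ε, c ε ta = (x ta, y ta)) → (∀ ε, c ε tb = (x tb, y tb)) →
      deriv (fun ε => ∫ t in ta..tb,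
          L ((c ε t).1) (deriv (fun s => (c ε s).1) t) ((c ε t).2)) 0
        + (∫ t in ta..tb, ∑ i, Fhat (x t) (deriv x t) i *
            deriv (fun ε => (c ε t).1) 0 i) = 0) :
    -- (1) the tangent lift ẋ(t) lies in the constraint set C = {α = 0}:
    (∀ t ∈ Set.Icc ta tb, α (x t) (deriv x t) = 0) ∧
    -- (2) x is critical for (N, L₀, F̂) among variations constrained to C:
    (∀ c : ℝ → ℝ → (Fin n → ℝ),
      ContDiff ℝ (⊤ : ℕ∞) (fun p : ℝ × ℝ => c p.1 p.2) →
      (∀ t, c 0 t = x t) →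
      (∀ ε, c ε ta = x ta) → (∀ ε, c ε tb = x tb) →
      (∀ ε t, α (c ε t) (deriv (fun s => c ε s) t) = 0) →
      deriv (fun ε => ∫ t in ta..tb, L0 (c ε t) (deriv (fun s => c ε s) t)) 0
        + (∫ t in ta..tb, ∑ i, Fhat (x t) (deriv x t) i *
            deriv (fun ε => c ε t) 0 i) = 0) := by
  have hxd : ContDiff ℝ (⊤ : ℕ∞) (deriv x) := by
    have h : ContDiff ℝ (((⊤ : ℕ∞) : WithTop ℕ∞) + 1) x := hx
    exact (contDiff_succ_iff_deriv.mp h).2.2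
  constructor
  · -- Part 1
    set f : ℝ → Fin m → ℝ := fun t => α (x t) (deriv x t) with hfdef
    have hfC : ContDiff ℝ (⊤ : ℕ∞) f := hα.comp (ContDiff.prodMk hx hxd)
    set w : ℝ → ℝ := fun t => (t - ta) * (tb - t) with hwdef
    have hwC : ContDiff ℝ (⊤ : ℕ∞) w := ((contDiff_id.sub contDiff_const).mul
      (contDiff_const.sub contDiff_id))
    have hC : ContDiff ℝ (⊤ : ℕ∞) (fun p : ℝ × ℝ =>
        ((fun ε t => (x t, y t + (ε * w t) • f t)) p.1 p.2)) := by
      exact ContDiff.prodMk (hx.comp contDiff_snd) ((hy.comp contDiff_snd).add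
        ((contDiff_fst.mul (hwC.comp contDiff_snd)).smul (hfC.comp contDiff_snd)))
    have H := hcrit (fun ε t => (x t, y t + (ε * w t) • f t)) hC
      (fun t => by simp) (fun ε => by simp [hwdef]) (fun ε => by simp [hwdef])
    dsimp only at H
    -- pointwise rewrite of the Lagrangian
    set base : ℝ → ℝ := fun t => L0 (x t) (deriv x t) + ∑ a, f t a * y t a with hbasedef
    set h : ℝ → ℝ := fun t => w t * ∑ a, f t a * f t a with hhdef
    have hpt : ∀ (ε t : ℝ),
        L (x t) (deriv x t) (y t + (ε * w t) • f t) = base t + ε * h t := by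
      intro ε t
      rw [hL]
      have hsum : ∑ a, α (x t) (deriv x t) a * (y t + (ε * w t) • f t) a
          = (∑ a, f t a * y t a) + ε * (w t * ∑ a, f t a * f t a) := by
        rw [Finset.mul_sum, Finset.mul_sum, ← Finset.sum_add_distrib]
        refine Finset.sum_congr rfl (fun a _ => ?_)
        simp only [Pi.add_apply, Pi.smul_apply, smul_eq_mul, hfdef]
        ring
      rw [hsum, hbasedef, hhdef]
      ring
    simp only [hpt] at H
    -- the force term vanishes
    simp only [deriv_const', Pi.zero_apply, mul_zero, Finset.sum_const_zero,
      intervalIntegral.integral_zero, add_zero] at H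
    -- compute the derivative
    have hbaseC : Continuous base := by
      refine (hL0.continuous.comp ((hx.continuous.prodMk hxd.continuous))).add ?_
      exact continuous_finset_sum _ (fun a _ =>
        ((continuous_apply a).comp hfC.continuous).mul ((continuous_apply a).comp hy.continuous))
    have hhC : Continuous h := by
      refine hwC.continuous.mul ?_
      exact continuous_finset_sum _ (fun a _ =>
        ((continuous_apply a).comp hfC.continuous).mul ((continuous_apply a).comp hfC.continuous))
    have hsplit : ∀ ε : ℝ, (∫ t in ta..tb, (base t + ε * h t))
        = (∫ t in ta..tb, base t) + ε * ∫ t in ta..tb, h t := by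
      intro ε
      rw [intervalIntegral.integral_add (f := base) (g := fun t => ε * h t) (hbaseC.intervalIntegrable _ _)
        ((continuous_const.mul hhC : Continuous fun t => ε * h t).intervalIntegrable _ _), intervalIntegral.integral_const_mul]
    simp only [hsplit] at H
    have hder : deriv (fun ε : ℝ => (∫ t in ta..tb, base t) + ε * ∫ t in ta..tb, h t) 0
        = ∫ t in ta..tb, h t := by
      have := (((hasDerivAt_id (0:ℝ)).mul_const (∫ t in ta..tb, h t)).const_add
        (∫ t in ta..tb, base t)).deriv
      simpa using this
    rw [hder] at H
    -- now H : ∫ h = 0 ; conclude h = 0 on Ioo, hence f = 0 on Icc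
    have hzero : ∀ t ∈ Set.Ioo ta tb, h t = 0 := by
      refine nonneg_integral_zero hhC (fun t ht => ?_) H
      refine mul_nonneg ?_ (Finset.sum_nonneg (fun a _ => mul_self_nonneg _))
      have hwt : w t = (t - ta) * (tb - t) := rfl
      rw [hwt]; nlinarith [ht.1, ht.2]
    have hfIoo : ∀ t ∈ Set.Ioo ta tb, f t = 0 := by
      intro t ht
      have hwpos : 0 < w t := by
        have hwt : w t = (t - ta) * (tb - t) := rfl
        rw [hwt]; nlinarith [ht.1, ht.2]
      have hs : ∑ a, f t a * f t a = 0 := by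
        have := hzero t ht
        rw [hhdef] at this
        exact (mul_eq_zero.mp this).resolve_left (ne_of_gt hwpos)
      funext a
      have := (Finset.sum_eq_zero_iff_of_nonneg
        (fun a _ => mul_self_nonneg (f t a))).mp hs a (Finset.mem_univ a)
      exact mul_self_eq_zero.mp this
    have hcl : Set.EqOn f 0 (Set.Icc ta tb) := by
      have h1 : Set.EqOn f 0 (Set.Ioo ta tb) := fun t ht => hfIoo t ht
      have h2 := h1.closure hfC.continuous continuous_const
      rwa [closure_Ioo htab.ne] at h2
    exact fun t ht => hcl ht
  · -- Part 2
    intro c hc h0 hta htb hcon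
    have H := hcrit (fun ε t => (c ε t, y t)) (ContDiff.prodMk hc (hy.comp contDiff_snd))
      (fun t => by show (c 0 t, y t) = (x t, y t); rw [h0 t])
      (fun ε => by show (c ε ta, y ta) = (x ta, y ta); rw [hta ε])
      (fun ε => by show (c ε tb, y tb) = (x tb, y tb); rw [htb ε])
    dsimp only at H
    have hpt : ∀ (ε t : ℝ), L (c ε t) (deriv (fun s => c ε s) t) (y t)
        = L0 (c ε t) (deriv (fun s => c ε s) t) := by
      intro ε t
      rw [hL]
      have := hcon ε t
      simp [this]
    simp only [hpt] at H
    exact H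
end

section
/- Let ω be a principal connection one-form on a principal G-bundle π : Q → Q/G (right action), μ ∈ 𝔤*, and ω^μ = ⟨μ, ω⟩ the real-valued one-form obtained by pairing with μ. Then for every ξ in the isotropy algebra 𝔤_μ, the contraction i_{ξ_Q} dω^μ = 0; consequently dω^μ is horizontal with respect to the fibration Q → Q/G_μ and, being G_μ-invariant, descends to a 2-form β^μ on Q/G_μ. -/
/-!
In the flat model, Cartan's formula reads
`dα(X, v) = (L_X α)(v) - d(α(X))(v)`, the only input being the product rule for the pairing
`p ↦ α_p (X p)`. For `α = ω^μ` and `X = ξ_Q`, the term `α(X) = μ ξ` is constant by `ω(ξ_Q) = ξ`,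
and equivariance gives `(L_X α)(v) = -μ ⁅ξ, ω v⁆`, which vanishes when `ξ ∈ 𝔤_μ`.
-/

section

variable {𝕜 E F G : Type*} [NontriviallyNormedField 𝕜]
  [NormedAddCommGroup E] [NormedSpace 𝕜 E] [NormedAddCommGroup F] [NormedSpace 𝕜 F]
  [NormedAddCommGroup G] [NormedSpace 𝕜 G]

theorem LinearMap.apply_eq_of_hasFDerivAt (L : F →ₗ[𝕜] G) {L' : F →L[𝕜] G} {w : F}
    (h : HasFDerivAt L L' w) (u : F) : L' u = L u := by
  have hline : HasLineDerivAt 𝕜 L (L u) w u := by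
    have : HasDerivAt (fun t : 𝕜 => L w + t • L u) (L u) 0 := by
      simpa using ((hasDerivAt_id (0 : 𝕜)).smul_const (L u)).const_add (L w)
    simpa [HasLineDerivAt, map_add, map_smul] using this
  exact (h.hasLineDerivAt u).unique hline

theorem fderiv_apply_comp_self (α : E → F →ₗ[𝕜] G) (X : E → F) {q : E}
    (hα : DifferentiableAt 𝕜 (fun p : E × F => α p.1 p.2) (q, X q))
    (hX : DifferentiableAt 𝕜 X q) (v : E) :
    fderiv 𝕜 (fun p => α p (X p)) q v
      = fderiv 𝕜 (fun p => α p (X q)) q v + α q (fderiv 𝕜 X q v) := by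
  set D := fderiv 𝕜 (fun p : E × F => α p.1 p.2) (q, X q)
  have hD : HasFDerivAt (fun p : E × F => α p.1 p.2) D (q, X q) := hα.hasFDerivAt
  have hdiag : HasFDerivAt (fun p => α p (X p))
      (D.comp ((ContinuousLinearMap.id 𝕜 E).prod (fderiv 𝕜 X q))) q :=
    hD.comp q (f := fun p => (p, X p)) ((hasFDerivAt_id q).prodMk hX.hasFDerivAt)
  have hfst : HasFDerivAt (fun p => α p (X q)) (D.comp (ContinuousLinearMap.inl 𝕜 E F)) q :=
    hD.comp q (f := fun p => (p, X q)) (hasFDerivAt_prodMk_left q (X q))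
  have hsnd : D (0, fderiv 𝕜 X q v) = α q (fderiv 𝕜 X q v) :=
    (α q).apply_eq_of_hasFDerivAt
      (hD.comp (X q) (f := fun y => (q, y)) (hasFDerivAt_prodMk_right q (X q))) _
  rw [hdiag.fderiv, hfst.fderiv, ← hsnd]
  simp only [ContinuousLinearMap.comp_apply, ContinuousLinearMap.prod_apply,
    ContinuousLinearMap.id_apply, ContinuousLinearMap.inl_apply, ← map_add, Prod.mk_add_mk,
    add_zero, zero_add]

end

/-- For a principal connection ω on Q → Q/G (right action) and
μ ∈ 𝔤*, the one-form ω^μ = ⟨μ, ω⟩ satisfies i_{ξ_Q} dω^μ = 0 for every ξ in the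
isotropy algebra 𝔤_μ = {ξ : ad*_ξ μ = 0}; hence dω^μ is horizontal w.r.t.
Q → Q/G_μ (and, being G_μ-invariant, descends to a 2-form β^μ on Q/G_μ).

Model: Q is a chart modelled on the normed space E; ω q : E →ₗ 𝔤 is the
connection form at q, with ω(ξ_Q) = ξ (`hconn`); σ ξ = ξ_Q is the fundamental
vector field; infinitesimal equivariance L_{ξ_Q}ω = −ad_ξ ω, paired with μ,
is hypothesis `hequiv` (using (L_X α)_q(v) = D(α(·)v)_q(X q) + α_q(DX_q v) for
constant v).  The exterior derivative is
dω^μ_q(u, v) = D(ω^μ(·)v)_q(u) − D(ω^μ(·)u)_q(v), and the conclusion is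
dω^μ_q(ξ_Q(q), v) = 0 for all q, v whenever μ⁅ξ, η⁆ = 0 for all η. -/
theorem stmt8 {E 𝔤 : Type*} [NormedAddCommGroup E] [NormedSpace ℝ E]
    [LieRing 𝔤] [LieAlgebra ℝ 𝔤]
    (μ : Module.Dual ℝ 𝔤)
    (ω : E → E →ₗ[ℝ] 𝔤) (σ : 𝔤 → E → E)
    (hconn : ∀ (q : E) (ξ : 𝔤), ω q (σ ξ q) = ξ)
    (hσ : ∀ ξ : 𝔤, Differentiable ℝ (σ ξ))
    (hω : Differentiable ℝ fun p : E × E => μ (ω p.1 p.2))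
    (hequiv : ∀ (ξ : 𝔤) (q v : E),
      fderiv ℝ (fun p => μ (ω p v)) q (σ ξ q) + μ (ω q (fderiv ℝ (σ ξ) q v))
        = -μ ⁅ξ, ω q v⁆) :
    ∀ ξ : 𝔤, (∀ η : 𝔤, μ ⁅ξ, η⁆ = 0) →
      ∀ q v : E,
        fderiv ℝ (fun p => μ (ω p v)) q (σ ξ q)
          - fderiv ℝ (fun p => μ (ω p (σ ξ q))) q v = 0 := by
  intro ξ hξ q v
  have hcartan := fderiv_apply_comp_self (fun p => μ ∘ₗ ω p) (σ ξ) (hω _) (hσ ξ q) v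
  have hcontraction_const : (fun p => μ (ω p (σ ξ p))) = fun _ => μ ξ := by
    funext p; rw [hconn]
  have hlie_zero := hequiv ξ q v
  rw [hξ, neg_zero] at hlie_zero
  simp only [LinearMap.comp_apply, hcontraction_const, fderiv_fun_const, Pi.zero_apply,
    zero_apply] at hcartan
  linear_combination hlie_zero + hcartan
end

section
/- For the Lagrangian system (Q, R^μ, F + G^μ) with F a G-invariant force and G^μ the gyroscopic force of dω^μ, the contraction of the total force with a symmetry generator satisfies ⟨(F + G^μ)(v_q), ξ_Q(q)⟩ = −⟨ad*_ξ μ, ω(q)(v_q)⟩ for all ξ ∈ 𝔤; combined with ξ_{TQ}(R^μ)(v_q) = ⟨ad*_ξ μ, ω(q)(v_q)⟩, this implies that the momentum J_{R^μ} is conserved along critical curves of (Q, R^μ, F + G^μ). -/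
open scoped BigOperators

lemma expand_basis {d : ℕ} (a : Fin d → ℝ) :
    a = ∑ i, a i • (Pi.single i 1 : Fin d → ℝ) := by
  funext j
  simp [Finset.sum_apply, Pi.single_apply]

lemma clm_sum {d : ℕ} (L : (Fin d → ℝ) →L[ℝ] ℝ) (a : Fin d → ℝ) :
    L a = ∑ i, a i * L (Pi.single i 1) := by
  conv_lhs => rw [expand_basis a]
  simp [smul_eq_mul]

lemma clm_sum2 {d : ℕ} (L : ((Fin d → ℝ) × (Fin d → ℝ)) →L[ℝ] ℝ) (a b : Fin d → ℝ) :
    L (a, b) = (∑ i, a i * L (Pi.single i 1, 0)) + ∑ i, b i * L (0, Pi.single i 1) := by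
  have h : (a, b) = (∑ i, a i • ((Pi.single i 1 : Fin d → ℝ), (0 : Fin d → ℝ)))
      + ∑ i, b i • ((0 : Fin d → ℝ), (Pi.single i 1 : Fin d → ℝ)) := by
    ext j
    · simp [Prod.fst_sum, Finset.sum_apply, Pi.single_apply]
    · simp [Prod.snd_sum, Finset.sum_apply, Pi.single_apply]
  rw [h, map_add, map_sum, map_sum]
  simp only [map_smul, smul_eq_mul]

/-- ∂K/∂qⁱ. -/
noncomputable def pdq12 {d : ℕ} (K : (Fin d → ℝ) × (Fin d → ℝ) → ℝ)
    (i : Fin d) (p : (Fin d → ℝ) × (Fin d → ℝ)) : ℝ :=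
  fderiv ℝ K p (Pi.single i 1, 0)

/-- ∂K/∂q̇ⁱ. -/
noncomputable def pdv12 {d : ℕ} (K : (Fin d → ℝ) × (Fin d → ℝ) → ℝ)
    (i : Fin d) (p : (Fin d → ℝ) × (Fin d → ℝ)) : ℝ :=
  fderiv ℝ K p (0, Pi.single i 1)

/-- For the Lagrangian system (Q, R^μ, F + G^μ), with F
G-invariant (so ⟨F, ξ_Q⟩ = 0) and G^μ the gyroscopic force of dω^μ, the total
force contracted with a symmetry generator satisfies
⟨(F + G^μ)(v_q), ξ_Q(q)⟩ = −⟨ad*_ξ μ, ω(q)(v_q)⟩ = −μ⁅ξ, ω(q)(v_q)⁆;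
combined with ξ_{TQ}(R^μ)(v_q) = μ⁅ξ, ω(q)(v_q)⁆ this implies that the
momentum J_{R^μ}(v_q)(ξ) = Σᵢ (∂R^μ/∂q̇ⁱ) ξ_Q(q)ⁱ is conserved along critical
curves of (Q, R^μ, F + G^μ).

Model: Q a chart ≅ ℝ^d; ω the connection form (so ω^μ(q)(v) = μ(ω q v));
σ ξ = ξ_Q; `hconn`, `hequiv` are the connection property and its (paired)
infinitesimal equivariance, from which the structure identity
⟨G^μ(v_q), ξ_Q(q)⟩ = −μ⁅ξ, ω(q)(v_q)⁆ follows; `hXi` is the transformation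
rule for R^μ; `hEL` are the forced Euler–Lagrange equations along (q, q̇). -/
theorem stmt12 {d : ℕ} {𝔤 : Type*} [LieRing 𝔤] [LieAlgebra ℝ 𝔤]
    (μ : Module.Dual ℝ 𝔤)
    (ω : (Fin d → ℝ) → (Fin d → ℝ) →ₗ[ℝ] 𝔤)
    (σ : 𝔤 → (Fin d → ℝ) → (Fin d → ℝ))
    (F : (Fin d → ℝ) × (Fin d → ℝ) → Fin d → ℝ)
    (Rμ : (Fin d → ℝ) × (Fin d → ℝ) → ℝ)
    (Gμ : (Fin d → ℝ) × (Fin d → ℝ) → Fin d → ℝ)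
    -- G^μ(q,v) = −i_v dω^μ(q), componentwise on basis vectors:
    (hGμ : ∀ q v (i : Fin d), Gμ (q, v) i
        = -(fderiv ℝ (fun p => μ (ω p (Pi.single i 1))) q v
            - fderiv ℝ (fun p => μ (ω p v)) q (Pi.single i 1)))
    (hconn : ∀ q (ξ : 𝔤), ω q (σ ξ q) = ξ)
    (hσ : ∀ ξ : 𝔤, ContDiff ℝ (⊤ : ℕ∞) (σ ξ))
    (hωd : ContDiff ℝ (⊤ : ℕ∞) fun p : (Fin d → ℝ) × (Fin d → ℝ) => μ (ω p.1 p.2))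
    (hRd : ContDiff ℝ (⊤ : ℕ∞) Rμ)
    (hequiv : ∀ (ξ : 𝔤) (q v : Fin d → ℝ),
      fderiv ℝ (fun p => μ (ω p v)) q (σ ξ q) + μ (ω q (fderiv ℝ (σ ξ) q v))
        = -μ ⁅ξ, ω q v⁆)
    -- F is G-invariant: it annihilates the symmetry generators
    (hF : ∀ q v (ξ : 𝔤), (∑ i, F (q, v) i * σ ξ q i) = 0)
    -- transformation rule ξ_{TQ}(R^μ)(v_q) = μ⁅ξ, ω(q)(v_q)⁆
    (hXi : ∀ (ξ : 𝔤) (q v : Fin d → ℝ),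
      fderiv ℝ Rμ (q, v) (σ ξ q, fderiv ℝ (σ ξ) q v) = μ ⁅ξ, ω q v⁆) :
    -- (1) contraction of the total force with the generators:
    (∀ (q v : Fin d → ℝ) (ξ : 𝔤),
      (∑ i, (F (q, v) i + Gμ (q, v) i) * σ ξ q i) = -μ ⁅ξ, ω q v⁆) ∧
    -- (2) J_{R^μ} is conserved along critical curves of (Q, R^μ, F + G^μ):
    (∀ (q q' q'' : ℝ → Fin d → ℝ),
      (∀ t, HasDerivAt q (q' t) t) → (∀ t, HasDerivAt q' (q'' t) t) →
      (∀ t (i : Fin d),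
        deriv (fun s => pdv12 Rμ i (q s, q' s)) t - pdq12 Rμ i (q t, q' t)
          = F (q t, q' t) i + Gμ (q t, q' t) i) →
      ∀ (ξ : 𝔤) (t : ℝ),
        deriv (fun s => ∑ i, pdv12 Rμ i (q s, q' s) * σ ξ (q s) i) t = 0) := by
  classical
  set Φ : (Fin d → ℝ) × (Fin d → ℝ) → ℝ := fun p => μ (ω p.1 p.2) with hΦdef
  have hΦdiff : Differentiable ℝ Φ := hωd.differentiable (by simp)
  have hdiff1 : ∀ w : Fin d → ℝ, Differentiable ℝ (fun p => μ (ω p w)) := fun w =>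
    hΦdiff.comp (differentiable_id.prodMk (differentiable_const w))
  have hpart1 : ∀ (q w v : Fin d → ℝ),
      fderiv ℝ (fun p => μ (ω p w)) q v = fderiv ℝ Φ (q, w) (v, 0) := by
    intro q w v
    have h1 : HasFDerivAt (fun p : Fin d → ℝ => (p, w))
        ((ContinuousLinearMap.id ℝ (Fin d → ℝ)).prod 0) q :=
      (hasFDerivAt_id q).prodMk (hasFDerivAt_const w q)
    have h2 : HasFDerivAt (fun p : Fin d → ℝ => μ (ω p w))
        ((fderiv ℝ Φ (q, w)).comp
          ((ContinuousLinearMap.id ℝ (Fin d → ℝ)).prod 0)) q :=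
      by have := (hΦdiff (q, w)).hasFDerivAt.comp q h1; exact this
    rw [h2.fderiv]
    rfl
  have hpart2 : ∀ (q w u : Fin d → ℝ), fderiv ℝ Φ (q, w) (0, u) = μ (ω q u) := by
    intro q w u
    have h1 : HasFDerivAt (fun x : Fin d → ℝ => (q, x))
        ((0 : (Fin d → ℝ) →L[ℝ] (Fin d → ℝ)).prod (ContinuousLinearMap.id ℝ _)) w :=
      (hasFDerivAt_const q w).prodMk (hasFDerivAt_id w)
    have h2 : HasFDerivAt (fun x : Fin d → ℝ => μ (ω q x))
        ((fderiv ℝ Φ (q, w)).comp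
          ((0 : (Fin d → ℝ) →L[ℝ] (Fin d → ℝ)).prod (ContinuousLinearMap.id ℝ _))) w :=
      (hΦdiff (q, w)).hasFDerivAt.comp w h1
    have h3 : HasFDerivAt (fun x : Fin d → ℝ => μ (ω q x))
        (LinearMap.toContinuousLinearMap (μ.comp (ω q))) w :=
      (LinearMap.toContinuousLinearMap (μ.comp (ω q))).hasFDerivAt
    have h4 := h2.unique h3
    have h5 := congrArg (fun (L : (Fin d → ℝ) →L[ℝ] ℝ) => L u) h4
    simpa using h5
  have hA : ∀ (q w v : Fin d → ℝ),
      fderiv ℝ (fun p => μ (ω p w)) q v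
        = ∑ i, w i * fderiv ℝ (fun p => μ (ω p (Pi.single i 1))) q v := by
    intro q w v
    have hfun : (fun p => μ (ω p w))
        = fun p => ∑ i, w i * μ (ω p (Pi.single i 1)) := by
      funext p
      conv_lhs => rw [expand_basis w]
      rw [map_sum, map_sum]
      exact Finset.sum_congr rfl fun i _ => by rw [map_smul, map_smul, smul_eq_mul]
    have hD : HasFDerivAt (fun p => ∑ i, w i * μ (ω p (Pi.single i 1)))
        (∑ i, w i • fderiv ℝ (fun p => μ (ω p (Pi.single i 1))) q) q := by
      apply HasFDerivAt.fun_sum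
      intro i _
      exact ((hdiff1 (Pi.single i 1) q).hasFDerivAt).const_mul (w i)
    rw [hfun, hD.fderiv]
    simp [smul_eq_mul]
  have hchain : ∀ (ξ : 𝔤) (q v : Fin d → ℝ),
      fderiv ℝ (fun p => μ (ω p (σ ξ q))) q v = -μ (ω q (fderiv ℝ (σ ξ) q v)) := by
    intro ξ q v
    have hσd : Differentiable ℝ (σ ξ) := (hσ ξ).differentiable (by simp)
    have h1 : HasFDerivAt (fun p : Fin d → ℝ => (p, σ ξ p))
        ((ContinuousLinearMap.id ℝ (Fin d → ℝ)).prod (fderiv ℝ (σ ξ) q)) q :=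
      (hasFDerivAt_id q).prodMk (hσd q).hasFDerivAt
    have h2 : HasFDerivAt (fun p : Fin d → ℝ => μ (ω p (σ ξ p)))
        ((fderiv ℝ Φ (q, σ ξ q)).comp
          ((ContinuousLinearMap.id ℝ (Fin d → ℝ)).prod (fderiv ℝ (σ ξ) q))) q :=
      by have := (hΦdiff (q, σ ξ q)).hasFDerivAt.comp q h1; exact this
    have hconst : (fun p : Fin d → ℝ => μ (ω p (σ ξ p))) = fun _ => μ ξ := by
      funext p; rw [hconn p ξ]
    have h3 : HasFDerivAt (fun p : Fin d → ℝ => μ (ω p (σ ξ p)))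
        (0 : (Fin d → ℝ) →L[ℝ] ℝ) q := by
      rw [hconst]; exact hasFDerivAt_const _ q
    have h4 := h3.unique h2
    have h5 : (0 : ℝ) = fderiv ℝ Φ (q, σ ξ q) (v, fderiv ℝ (σ ξ) q v) := by
      have := congrArg (fun (L : (Fin d → ℝ) →L[ℝ] ℝ) => L v) h4
      simpa using this
    have h6 : fderiv ℝ Φ (q, σ ξ q) (v, fderiv ℝ (σ ξ) q v)
        = fderiv ℝ Φ (q, σ ξ q) (v, 0)
          + fderiv ℝ Φ (q, σ ξ q) (0, fderiv ℝ (σ ξ) q v) := by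
      rw [← map_add, Prod.mk_add_mk, add_zero, zero_add]
    rw [h6, hpart2, ← hpart1] at h5
    linarith
  have part1 : ∀ (q v : Fin d → ℝ) (ξ : 𝔤),
      (∑ i, (F (q, v) i + Gμ (q, v) i) * σ ξ q i) = -μ ⁅ξ, ω q v⁆ := by
    intro q v ξ
    have hsplit : (∑ i, (F (q, v) i + Gμ (q, v) i) * σ ξ q i)
        = (∑ i, F (q, v) i * σ ξ q i) + ∑ i, Gμ (q, v) i * σ ξ q i := by
      rw [← Finset.sum_add_distrib]
      exact Finset.sum_congr rfl fun i _ => by ring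
    rw [hsplit, hF q v ξ, zero_add]
    have hGsum : (∑ i, Gμ (q, v) i * σ ξ q i)
        = (-(∑ i, σ ξ q i * fderiv ℝ (fun p => μ (ω p (Pi.single i 1))) q v))
          + ∑ i, σ ξ q i * fderiv ℝ (fun p => μ (ω p v)) q (Pi.single i 1) := by
      rw [← Finset.sum_neg_distrib, ← Finset.sum_add_distrib]
      exact Finset.sum_congr rfl fun i _ => by rw [hGμ q v i]; ring
    have hB : (∑ i, σ ξ q i * fderiv ℝ (fun p => μ (ω p v)) q (Pi.single i 1))
        = fderiv ℝ (fun p => μ (ω p v)) q (σ ξ q) := (clm_sum _ _).symm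
    have hAc : (∑ i, σ ξ q i * fderiv ℝ (fun p => μ (ω p (Pi.single i 1))) q v)
        = -μ (ω q (fderiv ℝ (σ ξ) q v)) := by
      rw [← hA q (σ ξ q) v]; exact hchain ξ q v
    have he := hequiv ξ q v
    rw [hGsum, hAc, hB]
    linarith
  refine ⟨part1, ?_⟩
  intro q q' q'' hq hq' hEL ξ t
  have hpdv : ∀ i : Fin d, ContDiff ℝ (⊤ : ℕ∞) (pdv12 Rμ i) := fun i =>
    (hRd.fderiv_right (by simp)).clm_apply contDiff_const
  have hcurve : HasDerivAt (fun s => (q s, q' s)) (q' t, q'' t) t := (hq t).prodMk (hq' t)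
  have hf : ∀ i, DifferentiableAt ℝ (fun s => pdv12 Rμ i (q s, q' s)) t := fun i =>
    by have := ((((hpdv i).differentiable (by simp)) (q t, q' t)).hasFDerivAt.comp_hasDerivAt
      t hcurve).differentiableAt; exact this
  set c : Fin d → ℝ := fderiv ℝ (σ ξ) (q t) (q' t) with hc
  have hg : ∀ i, HasDerivAt (fun s => σ ξ (q s) i) (c i) t := by
    intro i
    have h0 : HasDerivAt (fun s => σ ξ (q s)) c t :=
      (((hσ ξ).differentiable (by simp) (q t)).hasFDerivAt).comp_hasDerivAt t (hq t)
    have := (ContinuousLinearMap.proj (R := ℝ) (φ := fun _ : Fin d => ℝ)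
      i).hasFDerivAt.comp_hasDerivAt t h0
    exact this
  have hsum : HasDerivAt (fun s => ∑ i, pdv12 Rμ i (q s, q' s) * σ ξ (q s) i)
      (∑ i, (deriv (fun s => pdv12 Rμ i (q s, q' s)) t * σ ξ (q t) i
             + pdv12 Rμ i (q t, q' t) * c i)) t := by
    apply HasDerivAt.fun_sum
    intro i _
    exact ((hf i).hasDerivAt).mul (hg i)
  rw [hsum.deriv]
  have hELi : ∀ i, deriv (fun s => pdv12 Rμ i (q s, q' s)) t
      = pdq12 Rμ i (q t, q' t) + (F (q t, q' t) i + Gμ (q t, q' t) i) := by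
    intro i; have := hEL t i; linarith
  have hXt := hXi ξ (q t) (q' t)
  have hKey : fderiv ℝ Rμ (q t, q' t) (σ ξ (q t), c)
      = (∑ i, σ ξ (q t) i * pdq12 Rμ i (q t, q' t))
        + ∑ i, c i * pdv12 Rμ i (q t, q' t) := clm_sum2 _ _ _
  have hP := part1 (q t) (q' t) ξ
  have hstep : ∑ i, (deriv (fun s => pdv12 Rμ i (q s, q' s)) t * σ ξ (q t) i
        + pdv12 Rμ i (q t, q' t) * c i)
      = ((∑ i, σ ξ (q t) i * pdq12 Rμ i (q t, q' t))
          + ∑ i, c i * pdv12 Rμ i (q t, q' t))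
        + (∑ i, (F (q t, q' t) i + Gμ (q t, q' t) i) * σ ξ (q t) i) := by
    rw [← Finset.sum_add_distrib, ← Finset.sum_add_distrib]
    exact Finset.sum_congr rfl fun i _ => by rw [hELi i]; ring
  rw [hstep, ← hKey, hP, hXt]
  ring
end
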